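/- arXiv:1310.0227 — 4 statements merged into one kernel-verified Lean document; each statement's English description precedes it below -/
import Mathlib

section
/- For every positive integer d and every positive integer c, there exists a unique sequence of integers ε_d ≥ ε_{d-1} ≥ ... ≥ ε_1 ≥ -1 such that c = Σ_{i=1}^{d} binom(i + ε_i, i). (This is the Macaulay expansion of c in base d.) -/
/-- The term `binom(i + e, i)` of a Macaulay expansion, with the convention that
it vanishes when `i + e < i` (e.g. `binom(i-1, i) = 0` for `e = -1`). -/
def macaulayTerm (i : ℕ) (e : ℤ) : ℕ := ((i : ℤ) + e).toNat.choose i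

/-- `ε : Fin d → ℤ`, where `ε i` stands for `ε_{i+1}`, is the Macaulay expansion of `c`
in base `d`: it is weakly increasing, each entry is at least `-1`, and
`c = ∑_{i=1}^d binom(i + ε_i, i)`. -/
def IsMacaulayExpansion (d c : ℕ) (ε : Fin d → ℤ) : Prop :=
  Monotone ε ∧ (∀ i, -1 ≤ ε i) ∧ c = ∑ i : Fin d, macaulayTerm (i.1 + 1) (ε i)

/-- Natural-number version of `macaulayTerm`: `natTerm i n = binom(i + n, i + 1)`,
corresponding to `macaulayTerm (i+1) (n - 1)`. -/
def natTerm (i n : ℕ) : ℕ := (i + n).choose (i + 1)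

lemma sum_bound : ∀ (d b : ℕ) (n : Fin d → ℕ), Monotone n →
    (∀ i, n i ≤ b) → ∑ i : Fin d, natTerm i.1 (n i) < (d + b).choose d := by
  intro d
  induction d with
  | zero => intro b n _ _; simp
  | succ d ih =>
    intro b n hm hb
    rw [Fin.sum_univ_castSucc]
    have h1 : ∑ i : Fin d, natTerm (i.castSucc).1 (n i.castSucc) < (d + b).choose d := by
      have := ih b (fun i => n i.castSucc)
        (fun a b' h => hm (Fin.castSucc_le_castSucc_iff.mpr h)) (fun i => hb _)
      simpa using this
    have h2 : natTerm (Fin.last d).1 (n (Fin.last d)) ≤ (d + b).choose (d + 1) := by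
      have : (Fin.last d).1 + n (Fin.last d) ≤ d + b := by
        have := hb (Fin.last d); simp [Fin.val_last]; omega
      exact Nat.choose_le_choose _ (by simpa [Fin.val_last] using this)
    have h3 : (d + b + 1).choose (d + 1) = (d + b).choose d + (d + b).choose (d + 1) :=
      Nat.choose_succ_succ _ _
    have h4 : (d + 1) + b = d + b + 1 := by omega
    rw [h4, h3]
    have h5 : natTerm (Fin.last d).1 (n (Fin.last d)) = natTerm d (n (Fin.last d)) := by
      simp [Fin.val_last]
    omega

lemma sum_lt_of_last_lt {d : ℕ} (n m : Fin (d + 1) → ℕ) (hn : Monotone n)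
    (h : n (Fin.last d) < m (Fin.last d)) :
    ∑ i, natTerm i.1 (n i) < ∑ i, natTerm i.1 (m i) := by
  have h1 : ∑ i, natTerm i.1 (n i) < ((d + 1) + n (Fin.last d)).choose (d + 1) :=
    sum_bound (d + 1) (n (Fin.last d)) n hn (fun i => hn (Fin.le_last i))
  have h2 : ((d + 1) + n (Fin.last d)).choose (d + 1) ≤ natTerm (Fin.last d).1 (m (Fin.last d)) := by
    unfold natTerm
    exact Nat.choose_le_choose _ (by simp [Fin.val_last]; omega)
  have h3 : natTerm (Fin.last d).1 (m (Fin.last d)) ≤ ∑ i, natTerm i.1 (m i) :=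
    Finset.single_le_sum (f := fun i : Fin (d + 1) => natTerm i.1 (m i))
      (fun i _ => Nat.zero_le _) (Finset.mem_univ (Fin.last d))
  omega

lemma natMac_unique : ∀ d (n m : Fin d → ℕ), Monotone n → Monotone m →
    ∑ i : Fin d, natTerm i.1 (n i) = ∑ i : Fin d, natTerm i.1 (m i) → n = m := by
  intro d
  induction d with
  | zero => intro n m _ _ _; funext i; exact i.elim0
  | succ d ih =>
    intro n m hn hm hsum
    have hlast : n (Fin.last d) = m (Fin.last d) := by
      rcases lt_trichotomy (n (Fin.last d)) (m (Fin.last d)) with h | h | h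
      · exact absurd hsum (Nat.ne_of_lt (sum_lt_of_last_lt n m hn h))
      · exact h
      · exact absurd hsum.symm (Nat.ne_of_lt (sum_lt_of_last_lt m n hm h))
    have hs : ∑ i : Fin d, natTerm i.1 (n i.castSucc) = ∑ i : Fin d, natTerm i.1 (m i.castSucc) := by
      rw [Fin.sum_univ_castSucc (f := fun i : Fin (d + 1) => natTerm i.1 (n i)),
        Fin.sum_univ_castSucc (f := fun i : Fin (d + 1) => natTerm i.1 (m i))] at hsum
      simp only [Fin.coe_castSucc, Fin.val_last, hlast] at hsum
      omega
    have hinit := ih (fun i => n i.castSucc) (fun i => m i.castSucc)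
      (fun a b h => hn (Fin.castSucc_le_castSucc_iff.mpr h))
      (fun a b h => hm (Fin.castSucc_le_castSucc_iff.mpr h)) hs
    funext i
    rcases Fin.eq_castSucc_or_eq_last i with ⟨j, rfl⟩ | rfl
    · exact congrFun hinit j
    · exact hlast

lemma succ_le_choose (d : ℕ) (hd : 0 < d) : ∀ m, m + 1 ≤ (d + m).choose d := by
  obtain ⟨d, rfl⟩ : ∃ d', d = d' + 1 := ⟨d - 1, by omega⟩
  intro m
  induction m with
  | zero => simp
  | succ m ih =>
    have h1 : (d + 1 + (m + 1)) = (d + 1 + m) + 1 := by omega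
    have h2 : ((d + 1 + m) + 1).choose (d + 1) = (d + 1 + m).choose d + (d + 1 + m).choose (d + 1) :=
      Nat.choose_succ_succ _ _
    have h3 : 0 < (d + 1 + m).choose d := Nat.choose_pos (by omega)
    rw [h1, h2]
    omega

lemma natMac_exists : ∀ d b c, c < (d + b).choose d →
    ∃ n : Fin d → ℕ, Monotone n ∧ (∀ i, n i ≤ b) ∧ ∑ i : Fin d, natTerm i.1 (n i) = c := by
  intro d
  induction d with
  | zero =>
    intro b c hc
    simp only [Nat.zero_add, Nat.choose_zero_right] at hc
    refine ⟨Fin.elim0, fun a b h => a.elim0, fun a => a.elim0, ?_⟩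
    simp
    omega
  | succ d ih =>
    intro b c hc
    have hP0 : (d + 0).choose (d + 1) ≤ c := by
      rw [Nat.add_zero, Nat.choose_eq_zero_of_lt (by omega)]
      exact Nat.zero_le c
    set B := Nat.findGreatest (fun b' => (d + b').choose (d + 1) ≤ c) b with hB
    have hPB : (d + B).choose (d + 1) ≤ c :=
      Nat.findGreatest_spec (P := fun b' => (d + b').choose (d + 1) ≤ c) (Nat.zero_le b) hP0
    have hBb : B ≤ b := Nat.findGreatest_le b
    have hmax : c < (d + B + 1).choose (d + 1) := by
      rcases eq_or_lt_of_le hBb with heq | hlt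
      · have h4 : d + B + 1 = d + 1 + b := by omega
        rw [h4]; exact hc
      · have h := Nat.findGreatest_is_greatest (P := fun b' => (d + b').choose (d + 1) ≤ c)
          (lt_add_one B) (by omega)
        simp only [not_le] at h
        have h4 : d + B + 1 = d + (B + 1) := by omega
        rw [h4]; exact h
    have hps : (d + B + 1).choose (d + 1) = (d + B).choose d + (d + B).choose (d + 1) :=
      Nat.choose_succ_succ _ _
    have hr : c - (d + B).choose (d + 1) < (d + B).choose d := by omega
    obtain ⟨m, hmono, hble, hsum⟩ := ih B (c - (d + B).choose (d + 1)) hr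
    refine ⟨Fin.snoc m B, ?_, ?_, ?_⟩
    · intro i j hij
      rcases Fin.eq_castSucc_or_eq_last j with ⟨j', rfl⟩ | rfl
      · rcases Fin.eq_castSucc_or_eq_last i with ⟨i', rfl⟩ | rfl
        · simpa [Fin.snoc_castSucc] using hmono (Fin.castSucc_le_castSucc_iff.mp hij)
        · exact absurd (lt_of_le_of_lt hij (Fin.castSucc_lt_last j')) (lt_irrefl _)
      · rcases Fin.eq_castSucc_or_eq_last i with ⟨i', rfl⟩ | rfl
        · simp only [Fin.snoc_castSucc, Fin.snoc_last]
          exact hble i'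
        · exact le_refl _
    · intro i
      rcases Fin.eq_castSucc_or_eq_last i with ⟨j, rfl⟩ | rfl
      · simp only [Fin.snoc_castSucc]
        exact le_trans (hble j) hBb
      · simp only [Fin.snoc_last]
        exact hBb
    · rw [Fin.sum_univ_castSucc]
      simp only [Fin.snoc_castSucc, Fin.snoc_last, Fin.coe_castSucc, Fin.val_last]
      have hlt : natTerm d B = (d + B).choose (d + 1) := rfl
      rw [hsum, hlt]
      omega

/-- every positive integer `c` has a unique Macaulay expansion in base `d ≥ 1`. -/
theorem macaulay_expansion_existsUnique (d c : ℕ) (hd : 0 < d) (hc : 0 < c) :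
    ∃! ε : Fin d → ℤ, IsMacaulayExpansion d c ε := by
  have hcb : c < (d + (c + 1)).choose d := by
    have := succ_le_choose d hd (c + 1)
    omega
  obtain ⟨n, hmono, -, hsum⟩ := natMac_exists d (c + 1) c hcb
  have hterm : ∀ (k : ℕ) (i : Fin d), k = n i →
      macaulayTerm (i.1 + 1) ((k : ℤ) - 1) = natTerm i.1 (n i) := by
    intro k i hk
    subst hk
    unfold macaulayTerm natTerm
    congr 1
    omega
  refine ⟨fun i => (n i : ℤ) - 1, ⟨?_, ?_, ?_⟩, ?_⟩
  · intro a b h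
    have := hmono h
    show (n a : ℤ) - 1 ≤ (n b : ℤ) - 1
    omega
  · intro i
    show -1 ≤ (n i : ℤ) - 1
    have := Nat.zero_le (n i)
    omega
  · rw [Finset.sum_congr rfl (fun i _ => hterm (n i) i rfl), hsum]
  · intro ε ⟨hε1, hε2, hε3⟩
    set m : Fin d → ℕ := fun i => (ε i + 1).toNat with hm
    have hεm : ∀ i, ε i = (m i : ℤ) - 1 := by
      intro i
      have := hε2 i
      simp only [hm]
      omega
    have hmmono : Monotone m := by
      intro a b h
      have := hε1 h
      simp only [hm]
      omega
    have hsums : ∑ i : Fin d, natTerm i.1 (m i) = ∑ i : Fin d, natTerm i.1 (n i) := by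
      rw [hsum, hε3]
      refine Finset.sum_congr rfl (fun i _ => ?_)
      rw [hεm i]
      unfold macaulayTerm natTerm
      congr 1
      omega
    have heq := natMac_unique d m n hmmono hmono hsums
    funext i
    rw [hεm i, congrFun heq i]
end

section
/- The map c ↦ c^{⟨d⟩} is (weakly) increasing in c, where for c with Macaulay expansion c = Σ_{i=1}^d binom(i + ε_i, i) in base d one defines c^{⟨d⟩} := Σ_{i=1}^d binom(i + ε_i + 1, i + 1). -/
def macaulayUpper (d : ℕ) (ε : Fin d → ℤ) : ℕ :=
  ∑ i : Fin d, macaulayTerm (i.1 + 2) (ε i)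

lemma macaulayTerm_mono (k : ℕ) {e e' : ℤ} (h : e ≤ e') :
    macaulayTerm k e ≤ macaulayTerm k e' :=
  Nat.choose_le_choose _ (by omega)

lemma macaulayTerm_pos (k : ℕ) {e : ℤ} (he : 0 ≤ e) : 0 < macaulayTerm k e :=
  Nat.choose_pos (by omega)

lemma macaulayTerm_succ_succ (k : ℕ) {e : ℤ} (he : -1 ≤ e) :
    macaulayTerm (k + 1) (e + 1) = macaulayTerm k (e + 1) + macaulayTerm (k + 1) e := by
  have hk : ((k + 1 : ℕ) + (e + 1) : ℤ).toNat = ((k : ℤ) + (e + 1)).toNat + 1 := by omega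
  have hk' : ((k + 1 : ℕ) + e : ℤ).toNat = ((k : ℤ) + (e + 1)).toNat := by omega
  rw [macaulayTerm, macaulayTerm, macaulayTerm, hk, hk', Nat.choose_succ_succ]

/-- `S_r(ε)` of the header; `c = macaulaySum 0 ε` and `macaulayUpper d ε = macaulaySum 1 ε`
hold by definition. -/
def macaulaySum {d : ℕ} (r : ℕ) (ε : Fin d → ℤ) : ℕ :=
  ∑ i : Fin d, macaulayTerm (i.1 + r + 1) (ε i)

lemma macaulaySum_succ {d : ℕ} (r : ℕ) (ε : Fin (d + 1) → ℤ) :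
    macaulaySum r ε =
      macaulaySum r (ε ∘ Fin.castSucc) + macaulayTerm (d + r + 1) (ε (Fin.last d)) :=
  Fin.sum_univ_castSucc _

lemma macaulaySum_lt_macaulayTerm {d : ℕ} (r : ℕ) (ε : Fin d → ℤ) {e : ℤ} (he : -1 ≤ e)
    (hε : ∀ i, ε i ≤ e) : macaulaySum r ε < macaulayTerm (d + r) (e + 1) := by
  induction d with
  | zero => simpa [macaulaySum] using macaulayTerm_pos r (e := e + 1) (by omega)
  | succ d ih =>
    rw [macaulaySum_succ, show d + 1 + r = d + r + 1 by omega, macaulayTerm_succ_succ _ he]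
    exact Nat.add_lt_add_of_lt_of_le (ih _ fun i => hε _) (macaulayTerm_mono _ (hε _))

lemma macaulaySum_lt_of_lt_last {d : ℕ} (r : ℕ) {ε : Fin (d + 1) → ℤ} (ε' : Fin (d + 1) → ℤ)
    (hmono : Monotone ε) (hε : ∀ i, -1 ≤ ε i) (hlast : ε (Fin.last d) < ε' (Fin.last d)) :
    macaulaySum r ε < macaulaySum r ε' := calc
  macaulaySum r ε < macaulayTerm (d + 1 + r) (ε (Fin.last d) + 1) :=
    macaulaySum_lt_macaulayTerm r ε (hε _) fun i => hmono (Fin.le_last i)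
  _ ≤ macaulayTerm (d + r + 1) (ε' (Fin.last d)) := by
    rw [show d + 1 + r = d + r + 1 by omega]
    exact macaulayTerm_mono _ (by omega)
  _ ≤ macaulaySum r ε' := by
    rw [macaulaySum_succ]
    exact Nat.le_add_left _ _

theorem macaulaySum_lt_of_lt {d : ℕ} (r s : ℕ) {ε ε' : Fin d → ℤ}
    (hmono : Monotone ε) (hε : ∀ i, -1 ≤ ε i) (hmono' : Monotone ε') (hε' : ∀ i, -1 ≤ ε' i)
    (hlt : macaulaySum r ε < macaulaySum r ε') : macaulaySum s ε < macaulaySum s ε' := by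
  induction d with
  | zero => exact absurd hlt (lt_irrefl 0)
  | succ d ih =>
    rcases lt_trichotomy (ε (Fin.last d)) (ε' (Fin.last d)) with hlast | hlast | hlast
    · exact macaulaySum_lt_of_lt_last s ε' hmono hε hlast
    · rw [macaulaySum_succ, macaulaySum_succ, hlast] at hlt ⊢
      have hinit := ih (hmono.comp Fin.strictMono_castSucc.monotone) (fun _ => hε _)
        (hmono'.comp Fin.strictMono_castSucc.monotone) (fun _ => hε' _) (by omega)
      omega
    · exact absurd (macaulaySum_lt_of_lt_last r ε hmono' hε' hlast) hlt.asymm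

/-- the map `c ↦ c^{⟨d⟩}` is weakly increasing in `c`. -/
theorem macaulayUpper_mono (d c c' : ℕ) (ε ε' : Fin d → ℤ)
    (h : IsMacaulayExpansion d c ε) (h' : IsMacaulayExpansion d c' ε')
    (hcc : c ≤ c') :
    macaulayUpper d ε ≤ macaulayUpper d ε' := by
  obtain ⟨hmono, hε, rfl⟩ := h
  obtain ⟨hmono', hε', rfl⟩ := h'
  refine not_lt.1 fun hlt => (not_lt.2 hcc) ?_
  exact macaulaySum_lt_of_lt 1 0 hmono' hε' hmono hε hlt
end

section
/- Let I ⊂ S = C[x_0,...,x_n] be a homogeneous ideal, d ≥ 2 an integer, and c := h_I(d) the value of the Hilbert function of I at d. Then for all 0 ≤ k ≤ d: if c ≤ d then h_I(k) ≥ min(c, k+1); if d+1 ≤ c ≤ 2d then h_I(k) ≥ min(k + (c - d), 2k + 1); if c = 2d+1 then h_I(k) ≥ 2k + 1. -/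
open MvPolynomial

attribute [local instance] MvPolynomial.gradedAlgebra

/-- Hilbert function of an ideal `I ⊆ S = ℂ[x_0,…,x_{m-1}]`: `h_I(k) = dim_ℂ (S/I)_k`. -/
noncomputable def hilb (m : ℕ) (I : Ideal (MvPolynomial (Fin m) ℂ)) (k : ℕ) : ℕ :=
  Module.finrank ℂ
    (↥(homogeneousSubmodule (Fin m) ℂ k) ⧸
      Submodule.comap (homogeneousSubmodule (Fin m) ℂ k).subtype (Submodule.restrictScalars ℂ I))

/-!
Macaulay duality: under the pairing that makes the monomials orthonormal, the degree-`k`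
forms orthogonal to `I_k` form a space `W_k` of dimension `h_I(k)`, and contraction by a
variable (`X^α ↦ X^(α - eᵢ)`) is adjoint to multiplication by it, so it maps `W_{k+1}` into
`W_k`. Thus `W_{k+1}` lies in the space of primitives of `W_k`: the forms of degree `k + 1`
all of whose contractions lie in `W_k`. For a space `U` of forms of degree `j`, the primitives
have dimension at most `dim U` if `dim U ≤ j` and at most `dim U + 1` if `dim U ≤ 2j`: split
`U` along the kernel of one contraction, and induct on the degree and on the set of variables
whose contraction does not kill `U`. Hence `h(k) ≤ k` forces `h(k+1) ≤ h(k)`, and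
`h(k) ≤ 2k` forces `h(k+1) ≤ h(k) + 1`; running these from `k` up to `d` and comparing with
`c = h(d)` gives the three bounds.
-/

open Module

theorem Submodule.finrank_map_add_finrank_inf_ker {K M N : Type*} [Field K] [AddCommGroup M]
    [Module K M] [AddCommGroup N] [Module K N] (V : Submodule K M) [FiniteDimensional K V]
    (f : M →ₗ[K] N) :
    finrank K (V.map f) + finrank K ↥(V ⊓ LinearMap.ker f) = finrank K V := by
  rw [← LinearMap.finrank_range_add_finrank_ker (f ∘ₗ V.subtype), LinearMap.range_comp,
    Submodule.range_subtype, LinearMap.ker_comp, ← Submodule.finrank_map_subtype_eq,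
    Submodule.map_comap_subtype, inf_comm]

namespace MvPolynomial

section Contraction

variable {σ R : Type*} [CommSemiring R]

noncomputable def contract (i : σ) : MvPolynomial σ R →ₗ[R] MvPolynomial σ R where
  toFun p := p.divMonomial (Finsupp.single i 1)
  map_add' p q := by ext; simp
  map_smul' c p := by ext; simp

theorem coeff_contract (i : σ) (p : MvPolynomial σ R) (α : σ →₀ ℕ) :
    coeff α (contract i p) = coeff (Finsupp.single i 1 + α) p := rfl

theorem contract_comm (i i' : σ) (p : MvPolynomial σ R) :
    contract i (contract i' p) = contract i' (contract i p) := by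
  ext α
  simp only [coeff_contract, add_left_comm]

theorem contract_mem_homogeneousSubmodule {i : σ} {p : MvPolynomial σ R} {j : ℕ}
    (hp : p ∈ homogeneousSubmodule σ R (j + 1)) :
    contract i p ∈ homogeneousSubmodule σ R j := by
  intro α hα
  have h : Finsupp.weight 1 (Finsupp.single i 1 + α) = j + 1 := hp hα
  rw [map_add, Finsupp.weight_single, Pi.one_apply, smul_eq_mul, one_mul] at h
  omega

theorem eq_zero_of_forall_contract_eq_zero {p : MvPolynomial σ R} {j : ℕ}
    (hp : p ∈ homogeneousSubmodule σ R (j + 1)) (h : ∀ i, contract i p = 0) : p = 0 := by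
  ext α
  by_contra hα
  obtain ⟨i, hi⟩ : ∃ i, α i ≠ 0 := by
    by_contra! h0
    have hdeg : Finsupp.weight 1 α = j + 1 := hp hα
    simp [show α = 0 from Finsupp.ext h0] at hdeg
  have hα' : coeff α p = coeff (α - Finsupp.single i 1) (contract i p) := by
    rw [coeff_contract,
      add_tsub_cancel_of_le (Finsupp.single_le_iff.mpr (Nat.one_le_iff_ne_zero.mpr hi))]
  simp [hα', h i] at hα

theorem map_contract_le_homogeneousSubmodule {U : Submodule R (MvPolynomial σ R)} {j : ℕ}
    (hU : U ≤ homogeneousSubmodule σ R (j + 1)) (i : σ) :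
    U.map (contract i) ≤ homogeneousSubmodule σ R j := by
  rintro _ ⟨p, hp, rfl⟩
  exact contract_mem_homogeneousSubmodule (hU hp)

theorem map_contract_le_ker_contract {U : Submodule R (MvPolynomial σ R)} {i' : σ}
    (hU : U ≤ LinearMap.ker (contract i')) (i : σ) :
    U.map (contract i) ≤ LinearMap.ker (contract i') := by
  rintro _ ⟨_, hp, rfl⟩
  rw [LinearMap.mem_ker, contract_comm, hU hp, map_zero]

theorem eq_bot_of_le_ker_contract {U : Submodule R (MvPolynomial σ R)} {j : ℕ}
    (hU : U ≤ homogeneousSubmodule σ R (j + 1)) (h : ∀ i, U ≤ LinearMap.ker (contract i)) :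
    U = ⊥ :=
  eq_bot_iff.mpr fun _ hp ↦ (Submodule.mem_bot R).mpr <|
    eq_zero_of_forall_contract_eq_zero (hU hp) fun i ↦ h i hp

end Contraction

section Primitives

variable {σ K : Type*} [Field K]

instance [Finite σ] (j : ℕ) : FiniteDimensional K (homogeneousSubmodule σ K j) :=
  Module.Finite.iff_fg.mpr (homogeneousSubmodule_fg σ K j)

noncomputable def primitives (j : ℕ) (U : Submodule K (MvPolynomial σ K)) :
    Submodule K (MvPolynomial σ K) :=
  homogeneousSubmodule σ K j ⊓ ⨅ i, U.comap (contract i)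

theorem mem_primitives {j : ℕ} {U : Submodule K (MvPolynomial σ K)} {p : MvPolynomial σ K} :
    p ∈ primitives j U ↔ p ∈ homogeneousSubmodule σ K j ∧ ∀ i, contract i p ∈ U := by
  simp [primitives, Submodule.mem_inf, Submodule.mem_iInf]

theorem primitives_le_homogeneousSubmodule (j : ℕ) (U : Submodule K (MvPolynomial σ K)) :
    primitives j U ≤ homogeneousSubmodule σ K j :=
  inf_le_left

theorem primitives_bot (j : ℕ) :
    primitives (j + 1) (⊥ : Submodule K (MvPolynomial σ K)) = ⊥ :=
  eq_bot_of_le_ker_contract (primitives_le_homogeneousSubmodule _ _)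
    fun i _ hp ↦ (mem_primitives.mp hp).2 i

theorem inf_ker_contract_le_ker_contract [DecidableEq σ] {U : Submodule K (MvPolynomial σ K)}
    {x : σ} {T : Finset σ} (hT : ∀ i ∉ insert x T, U ≤ LinearMap.ker (contract i)) :
    ∀ i ∉ T, U ⊓ LinearMap.ker (contract x) ≤ LinearMap.ker (contract i) := by
  intro i hi
  rcases eq_or_ne i x with rfl | hix
  · exact inf_le_right
  · exact inf_le_left.trans (hT i (by simp [hix, hi]))

variable [Finite σ]

instance (j : ℕ) (U : Submodule K (MvPolynomial σ K)) : FiniteDimensional K (primitives j U) :=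
  Submodule.finiteDimensional_of_le (primitives_le_homogeneousSubmodule j U)

theorem finrank_primitives_le_of_contract (i : σ) {j : ℕ} {U : Submodule K (MvPolynomial σ K)}
    (hU : U ≤ homogeneousSubmodule σ K j) :
    finrank K (primitives (j + 1) U) ≤
      min (finrank K U) (finrank K (primitives j (U.map (contract i)))) +
        finrank K (primitives (j + 1) (U ⊓ LinearMap.ker (contract i))) := by
  have : FiniteDimensional K U := Submodule.finiteDimensional_of_le hU
  set V := primitives (j + 1) U
  have hmapU : V.map (contract i) ≤ U := by
    rintro _ ⟨p, hp, rfl⟩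
    exact (mem_primitives.mp hp).2 i
  have hmap : V.map (contract i) ≤ primitives j (U.map (contract i)) := by
    rintro _ ⟨p, hp, rfl⟩
    refine mem_primitives.mpr ⟨contract_mem_homogeneousSubmodule (mem_primitives.mp hp).1,
      fun i' ↦ ?_⟩
    rw [contract_comm]
    exact Submodule.mem_map_of_mem ((mem_primitives.mp hp).2 i')
  have hker : V ⊓ LinearMap.ker (contract i) ≤
      primitives (j + 1) (U ⊓ LinearMap.ker (contract i)) := by
    rintro p ⟨hp, hpi⟩
    refine mem_primitives.mpr
      ⟨(mem_primitives.mp hp).1, fun i' ↦ ⟨(mem_primitives.mp hp).2 i', ?_⟩⟩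
    rw [SetLike.mem_coe, LinearMap.mem_ker, contract_comm, LinearMap.mem_ker.mp hpi, map_zero]
  have := Submodule.finrank_map_add_finrank_inf_ker V (contract i)
  have := Submodule.finrank_mono hmapU
  have := Submodule.finrank_mono hmap
  have := Submodule.finrank_mono hker
  omega

theorem finrank_primitives_le_of_forall_notMem (T : Finset σ) {j : ℕ}
    {U : Submodule K (MvPolynomial σ K)} (hU : U ≤ homogeneousSubmodule σ K j)
    (hT : ∀ i ∉ T, U ≤ LinearMap.ker (contract i)) (hdim : finrank K U ≤ j) :
    finrank K (primitives (j + 1) U) ≤ finrank K U := by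
  classical
  induction j generalizing T U with
  | zero =>
    have : FiniteDimensional K U := Submodule.finiteDimensional_of_le hU
    obtain rfl : U = ⊥ := Submodule.finrank_eq_zero.mp (by omega)
    rw [primitives_bot]
  | succ j ih =>
    induction T using Finset.induction_on generalizing U with
    | empty =>
      obtain rfl : U = ⊥ := eq_bot_of_le_ker_contract hU fun i ↦ hT i (Finset.notMem_empty i)
      rw [primitives_bot]
    | insert x T hx ihT =>
      have : FiniteDimensional K U := Submodule.finiteDimensional_of_le hU
      have hsplit := Submodule.finrank_map_add_finrank_inf_ker U (contract x)
      have hstep := finrank_primitives_le_of_contract x hU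
      have hker := ihT (inf_le_left.trans hU) (inf_ker_contract_le_ker_contract hT)
        ((Submodule.finrank_mono inf_le_left).trans hdim)
      by_cases hK : finrank K ↥(U ⊓ LinearMap.ker (contract x)) = 0
      · omega
      · have := ih (insert x T) (map_contract_le_homogeneousSubmodule hU x)
          (fun i hi ↦ map_contract_le_ker_contract (hT i hi) x) (by omega)
        omega

theorem finrank_primitives_le_succ_of_forall_notMem (T : Finset σ) {j : ℕ}
    {U : Submodule K (MvPolynomial σ K)} (hU : U ≤ homogeneousSubmodule σ K j)
    (hT : ∀ i ∉ T, U ≤ LinearMap.ker (contract i)) (hdim : finrank K U ≤ 2 * j) :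
    finrank K (primitives (j + 1) U) ≤ finrank K U + 1 := by
  classical
  induction j generalizing T U with
  | zero =>
    have : FiniteDimensional K U := Submodule.finiteDimensional_of_le hU
    obtain rfl : U = ⊥ := Submodule.finrank_eq_zero.mp (by omega)
    rw [primitives_bot]; simp
  | succ j ih =>
    induction T using Finset.induction_on generalizing U with
    | empty =>
      obtain rfl : U = ⊥ := eq_bot_of_le_ker_contract hU fun i ↦ hT i (Finset.notMem_empty i)
      rw [primitives_bot]; simp
    | insert x T hx ihT =>
      have : FiniteDimensional K U := Submodule.finiteDimensional_of_le hU
      have hUx : U ⊓ LinearMap.ker (contract x) ≤ homogeneousSubmodule σ K (j + 1) :=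
        inf_le_left.trans hU
      have hTx := inf_ker_contract_le_ker_contract hT
      have hmap := map_contract_le_homogeneousSubmodule hU x
      have hTmap := fun i hi ↦ map_contract_le_ker_contract (hT i hi) x
      have hsplit := Submodule.finrank_map_add_finrank_inf_ker U (contract x)
      have hstep := finrank_primitives_le_of_contract x hU
      have hKU := Submodule.finrank_mono (inf_le_left : U ⊓ LinearMap.ker (contract x) ≤ U)
      by_cases hsmall : finrank K ↥(U ⊓ LinearMap.ker (contract x)) ≤ j + 1
      · have := finrank_primitives_le_of_forall_notMem T hUx hTx hsmall
        by_cases hK : finrank K ↥(U ⊓ LinearMap.ker (contract x)) ≤ 1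
        · omega
        · have := ih (insert x T) hmap hTmap (by omega)
          omega
      · have := ihT hUx hTx (by omega)
        have := finrank_primitives_le_of_forall_notMem (insert x T) hmap hTmap (by omega)
        omega

theorem finrank_primitives_le {j : ℕ} {U : Submodule K (MvPolynomial σ K)}
    (hU : U ≤ homogeneousSubmodule σ K j) (hdim : finrank K U ≤ j) :
    finrank K (primitives (j + 1) U) ≤ finrank K U :=
  have := Fintype.ofFinite σ
  finrank_primitives_le_of_forall_notMem Finset.univ hU
    (fun i hi ↦ absurd (Finset.mem_univ i) hi) hdim

theorem finrank_primitives_le_succ {j : ℕ} {U : Submodule K (MvPolynomial σ K)}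
    (hU : U ≤ homogeneousSubmodule σ K j) (hdim : finrank K U ≤ 2 * j) :
    finrank K (primitives (j + 1) U) ≤ finrank K U + 1 :=
  have := Fintype.ofFinite σ
  finrank_primitives_le_succ_of_forall_notMem Finset.univ hU
    (fun i hi ↦ absurd (Finset.mem_univ i) hi) hdim

end Primitives

section InverseSystem

variable {σ K : Type*} [Field K] [DecidableEq σ]

noncomputable def monomialPairing : MvPolynomial σ K →ₗ[K] Dual K (MvPolynomial σ K) :=
  (basisMonomials σ K).toDual

theorem monomialPairing_monomial_one_left (α : σ →₀ ℕ) (G : MvPolynomial σ K) :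
    monomialPairing (monomial α 1) G = coeff α G :=
  (basisMonomials σ K).toDual_apply_right α G

theorem monomialPairing_monomial_one_right (F : MvPolynomial σ K) (α : σ →₀ ℕ) :
    monomialPairing F (monomial α 1) = coeff α F :=
  (basisMonomials σ K).toDual_apply_left F α

theorem monomialPairing_X_mul (i : σ) (F G : MvPolynomial σ K) :
    monomialPairing (X i * F) G = monomialPairing F (contract i G) := by
  have h : (monomialPairing.flip G).comp (LinearMap.mulLeft K (X i)) =
      monomialPairing.flip (contract i G) := by
    refine (basisMonomials σ K).ext fun α ↦ ?_
    simp only [coe_basisMonomials, LinearMap.comp_apply, LinearMap.flip_apply,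
      LinearMap.mulLeft_apply, X, monomial_mul, one_mul, monomialPairing_monomial_one_left,
      coeff_contract]
  exact LinearMap.congr_fun h F

noncomputable def homogeneousPairing (k : ℕ) :
    LinearMap.BilinForm K (homogeneousSubmodule σ K k) :=
  monomialPairing.compl₁₂ (homogeneousSubmodule σ K k).subtype
    (homogeneousSubmodule σ K k).subtype

theorem ker_homogeneousPairing (k : ℕ) :
    LinearMap.ker (homogeneousPairing (σ := σ) (K := K) k) = ⊥ := by
  refine eq_bot_iff.mpr fun F hF ↦ (Submodule.mem_bot K).mpr (Subtype.ext ?_)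
  ext α
  by_cases hα : α.degree = k
  · have hmem : monomial α (1 : K) ∈ homogeneousSubmodule σ K k := isHomogeneous_monomial 1 hα
    have := LinearMap.congr_fun (LinearMap.mem_ker.mp hF) ⟨_, hmem⟩
    simpa [homogeneousPairing, monomialPairing_monomial_one_right] using this
  · by_contra hne
    have hdeg : Finsupp.weight 1 α = k := F.2 hne
    exact hα (by rwa [Finsupp.degree_eq_weight_one])

noncomputable def inverseSystem (I : Ideal (MvPolynomial σ K)) (k : ℕ) :
    Submodule K (MvPolynomial σ K) :=
  ((homogeneousPairing k).orthogonal
    ((I.restrictScalars K).comap (homogeneousSubmodule σ K k).subtype)).map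
      (homogeneousSubmodule σ K k).subtype

variable {I : Ideal (MvPolynomial σ K)}

theorem mem_inverseSystem {k : ℕ} {G : MvPolynomial σ K} :
    G ∈ inverseSystem I k ↔
      G ∈ homogeneousSubmodule σ K k ∧
        ∀ F ∈ I, F ∈ homogeneousSubmodule σ K k → monomialPairing F G = 0 := by
  constructor
  · rintro ⟨G, hG, rfl⟩
    exact ⟨G.2, fun F hF hFk ↦ hG ⟨F, hFk⟩ hF⟩
  · rintro ⟨hGk, hG⟩
    exact ⟨⟨G, hGk⟩, fun F hF ↦ hG F hF F.2, rfl⟩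

theorem inverseSystem_le_homogeneousSubmodule (I : Ideal (MvPolynomial σ K)) (k : ℕ) :
    inverseSystem I k ≤ homogeneousSubmodule σ K k :=
  Submodule.map_subtype_le _ _

theorem contract_mem_inverseSystem {k : ℕ} {G : MvPolynomial σ K}
    (hG : G ∈ inverseSystem I (k + 1)) (i : σ) : contract i G ∈ inverseSystem I k := by
  rw [mem_inverseSystem] at hG ⊢
  refine ⟨contract_mem_homogeneousSubmodule hG.1, fun F hF hFk ↦ ?_⟩
  rw [← monomialPairing_X_mul]
  exact hG.2 _ (I.mul_mem_left _ hF)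
    (add_comm k 1 ▸ SetLike.GradedMul.mul_mem (isHomogeneous_X K i) hFk)

theorem inverseSystem_succ_le_primitives (I : Ideal (MvPolynomial σ K)) (k : ℕ) :
    inverseSystem I (k + 1) ≤ primitives (k + 1) (inverseSystem I k) := fun _ hG ↦
  mem_primitives.mpr
    ⟨inverseSystem_le_homogeneousSubmodule I _ hG, contract_mem_inverseSystem hG⟩

variable [Finite σ]

theorem finrank_inverseSystem (I : Ideal (MvPolynomial σ K)) (k : ℕ) :
    finrank K (inverseSystem I k) =
      finrank K (homogeneousSubmodule σ K k ⧸
        (I.restrictScalars K).comap (homogeneousSubmodule σ K k).subtype) := by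
  have h := (homogeneousPairing (σ := σ) (K := K) k).finrank_add_finrank_orthogonal'
    ((I.restrictScalars K).comap (homogeneousSubmodule σ K k).subtype)
  rw [ker_homogeneousPairing, inf_bot_eq, finrank_bot] at h
  rw [inverseSystem, Submodule.finrank_map_subtype_eq, Submodule.finrank_quotient]
  omega

end InverseSystem

end MvPolynomial

theorem hilb_eq_finrank_inverseSystem (m : ℕ) (I : Ideal (MvPolynomial (Fin m) ℂ)) (k : ℕ) :
    hilb m I k = finrank ℂ (inverseSystem I k) :=
  (finrank_inverseSystem I k).symm

theorem hilb_succ_le_of_le (m : ℕ) (I : Ideal (MvPolynomial (Fin m) ℂ)) (k : ℕ)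
    (h : hilb m I k ≤ k) : hilb m I (k + 1) ≤ hilb m I k := by
  simp only [hilb_eq_finrank_inverseSystem] at h ⊢
  exact (Submodule.finrank_mono (inverseSystem_succ_le_primitives I k)).trans
    (finrank_primitives_le (inverseSystem_le_homogeneousSubmodule I k) h)

theorem hilb_succ_le_succ_of_le_two_mul (m : ℕ) (I : Ideal (MvPolynomial (Fin m) ℂ)) (k : ℕ)
    (h : hilb m I k ≤ 2 * k) : hilb m I (k + 1) ≤ hilb m I k + 1 := by
  simp only [hilb_eq_finrank_inverseSystem] at h ⊢
  exact (Submodule.finrank_mono (inverseSystem_succ_le_primitives I k)).trans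
    (finrank_primitives_le_succ (inverseSystem_le_homogeneousSubmodule I k) h)

theorem apply_le_apply_of_le_self {h : ℕ → ℕ} (step : ∀ k, h k ≤ k → h (k + 1) ≤ h k)
    {k d : ℕ} (hkd : k ≤ d) (hk : h k ≤ k) : h d ≤ h k := by
  induction d, hkd using Nat.le_induction with
  | base => exact le_rfl
  | succ d hkd ih => exact (step d (by omega)).trans ih

theorem apply_add_le_apply_add_of_le_two_mul {h : ℕ → ℕ}
    (step : ∀ k, h k ≤ 2 * k → h (k + 1) ≤ h k + 1) {k d : ℕ} (hkd : k ≤ d)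
    (hk : h k ≤ 2 * k) : h d + k ≤ h k + d := by
  induction d, hkd using Nat.le_induction with
  | base => exact le_rfl
  | succ d hkd ih =>
    have := step d (by omega)
    omega

theorem hilb_lower_bounds_low_degrees_general (n d k : ℕ) (hk : k ≤ d)
    (I : Ideal (MvPolynomial (Fin (n + 1)) ℂ)) :
    (hilb (n + 1) I d ≤ d → min (hilb (n + 1) I d) (k + 1) ≤ hilb (n + 1) I k) ∧
    (d + 1 ≤ hilb (n + 1) I d → hilb (n + 1) I d ≤ 2 * d →
      min (k + (hilb (n + 1) I d - d)) (2 * k + 1) ≤ hilb (n + 1) I k) ∧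
    (hilb (n + 1) I d = 2 * d + 1 → 2 * k + 1 ≤ hilb (n + 1) I k) := by
  have hle := apply_le_apply_of_le_self (hilb_succ_le_of_le (n + 1) I) hk
  have hadd :=
    apply_add_le_apply_add_of_le_two_mul (hilb_succ_le_succ_of_le_two_mul (n + 1) I) hk
  refine ⟨fun hc ↦ ?_, fun hc₁ hc₂ ↦ ?_, fun hc ↦ ?_⟩ <;> by_contra hlt
  · have := hle (by omega)
    omega
  · have := hadd (by omega)
    omega
  · have := hadd (by omega)
    omega

/-- lower bounds for `h_I(k)`, `0 ≤ k ≤ d`, in terms of `c = h_I(d)`. -/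
theorem hilb_lower_bounds_low_degrees (n d k : ℕ) (hd : 2 ≤ d) (hk : k ≤ d)
    (I : Ideal (MvPolynomial (Fin (n + 1)) ℂ))
    (hI : I.IsHomogeneous (homogeneousSubmodule (Fin (n + 1)) ℂ)) :
    (hilb (n + 1) I d ≤ d → min (hilb (n + 1) I d) (k + 1) ≤ hilb (n + 1) I k) ∧
    (d + 1 ≤ hilb (n + 1) I d → hilb (n + 1) I d ≤ 2 * d →
      min (k + (hilb (n + 1) I d - d)) (2 * k + 1) ≤ hilb (n + 1) I k) ∧
    (hilb (n + 1) I d = 2 * d + 1 → 2 * k + 1 ≤ hilb (n + 1) I k) :=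
  hilb_lower_bounds_low_degrees_general n d k hk I
end

section
/- Let S/I be an Artinian Gorenstein graded quotient of S = C[x_0,...,x_n] with socle degree N, and let I' ⊆ I be a homogeneous ideal such that S/I' is also Artinian Gorenstein with socle degree N + k. Then I = (I' : F) for some homogeneous form F of degree k. -/
open MvPolynomial

attribute [local instance] MvPolynomial.gradedAlgebra

/-- `S/I` is a graded Artinian Gorenstein quotient with socle degree `N`:
`I` is homogeneous and proper, `I` contains everything of degree `> N`,
`dim_ℂ (S/I)_N = 1`, and the multiplication pairing
`(S/I)_a × (S/I)_{N-a} → (S/I)_N` is nondegenerate. -/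
def IsArtinianGorenstein (m : ℕ) (I : Ideal (MvPolynomial (Fin m) ℂ)) (N : ℕ) : Prop :=
  I.IsHomogeneous (homogeneousSubmodule (Fin m) ℂ) ∧ I ≠ ⊤ ∧
  (∀ g : MvPolynomial (Fin m) ℂ, (∃ k, N < k ∧ g.IsHomogeneous k) → g ∈ I) ∧
  hilb m I N = 1 ∧
  (∀ a : ℕ, a ≤ N → ∀ g : MvPolynomial (Fin m) ℂ, g.IsHomogeneous a → g ∉ I →
    ∃ h : MvPolynomial (Fin m) ℂ, h.IsHomogeneous (N - a) ∧ g * h ∉ I)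

namespace GorensteinColonAux

noncomputable abbrev H (m d : ℕ) : Submodule ℂ (MvPolynomial (Fin m) ℂ) :=
  homogeneousSubmodule (Fin m) ℂ d

noncomputable abbrev Ic (m : ℕ) (J : Ideal (MvPolynomial (Fin m) ℂ)) (d : ℕ) :
    Submodule ℂ (H m d) :=
  Submodule.comap (H m d).subtype (Submodule.restrictScalars ℂ J)

instance (m d : ℕ) : FiniteDimensional ℂ (H m d) :=
  Submodule.finiteDimensional_of_le (S₂ := restrictTotalDegree (Fin m) ℂ d)
    (fun _ hp => (mem_restrictTotalDegree _ _ _).2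
      (((mem_homogeneousSubmodule _ _).1 hp).totalDegree_le))

lemma mk_eq_zero_iff {m : ℕ} {J : Ideal (MvPolynomial (Fin m) ℂ)} {d : ℕ} (x : H m d) :
    (Submodule.Quotient.mk x : H m d ⧸ Ic m J d) = 0 ↔ (x : MvPolynomial (Fin m) ℂ) ∈ J := by
  rw [Submodule.Quotient.mk_eq_zero]; exact Iff.rfl

/-- Multiplication `H m k × H m N → H m (N+k)` as an element-level map. -/
noncomputable def mulE {m N k : ℕ} (F : H m k) (w : H m N) : H m (N + k) :=
  ⟨(F : MvPolynomial (Fin m) ℂ) * (w : MvPolynomial (Fin m) ℂ), by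
    have : ((w : MvPolynomial (Fin m) ℂ) * (F : MvPolynomial (Fin m) ℂ)).IsHomogeneous (N + k) :=
      ((mem_homogeneousSubmodule _ _).1 w.2).mul ((mem_homogeneousSubmodule _ _).1 F.2)
    rw [mul_comm] at this
    exact (mem_homogeneousSubmodule _ _).2 this⟩

@[simp] lemma coe_mulE {m N k : ℕ} (F : H m k) (w : H m N) :
    ((mulE F w : H m (N + k)) : MvPolynomial (Fin m) ℂ)
      = (F : MvPolynomial (Fin m) ℂ) * (w : MvPolynomial (Fin m) ℂ) := rfl

set_option maxHeartbeats 1000000 in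
theorem key (m N k : ℕ) (I I' : Ideal (MvPolynomial (Fin m) ℂ)) (hII : I' ≤ I)
    (hI : IsArtinianGorenstein m I N) (hI' : IsArtinianGorenstein m I' (N + k)) :
    ∃ F : H m k, ∀ q : H m N, ((q : MvPolynomial (Fin m) ℂ) ∈ I ↔
      (q : MvPolynomial (Fin m) ℂ) * (F : MvPolynomial (Fin m) ℂ) ∈ I') := by
  classical
  have hQ2 : Module.finrank ℂ (H m (N + k) ⧸ Ic m I' (N + k)) = 1 := hI'.2.2.2.1
  have hQ1 : Module.finrank ℂ (H m N ⧸ Ic m I N) = 1 := hI.2.2.2.1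
  -- the bilinear multiplication map into Q2
  let b : H m k →ₗ[ℂ] H m N →ₗ[ℂ] (H m (N + k) ⧸ Ic m I' (N + k)) := LinearMap.mk₂ ℂ
    (fun F w => Submodule.Quotient.mk (mulE F w))
    (fun F G w => by
      rw [← Submodule.Quotient.mk_add]
      exact congrArg _ (Subtype.ext (add_mul _ _ _)))
    (fun c F w => by
      rw [← Submodule.Quotient.mk_smul]
      exact congrArg _ (Subtype.ext (smul_mul_assoc c _ _)))
    (fun F w₁ w₂ => by
      rw [← Submodule.Quotient.mk_add]
      exact congrArg _ (Subtype.ext (mul_add _ _ _)))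
    (fun c F w => by
      rw [← Submodule.Quotient.mk_smul]
      exact congrArg _ (Subtype.ext (mul_smul_comm c _ _)))
  have hbapply : ∀ (F : H m k) (w : H m N), b F w = Submodule.Quotient.mk (mulE F w) :=
    fun F w => rfl
  -- descend the second argument
  have hker : ∀ F : H m k, Ic m I' N ≤ LinearMap.ker (b F) := by
    intro F w hw
    rw [LinearMap.mem_ker, hbapply, mk_eq_zero_iff]
    exact Ideal.mul_mem_left _ _ hw
  let b2 : H m k →ₗ[ℂ] ((H m N ⧸ Ic m I' N) →ₗ[ℂ] (H m (N + k) ⧸ Ic m I' (N + k))) :=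
    { toFun := fun F => Submodule.liftQ _ (b F) (hker F)
      map_add' := fun F G => by
        apply Submodule.linearMap_qext
        refine LinearMap.ext fun w => ?_
        simp only [LinearMap.comp_apply, Submodule.mkQ_apply, Submodule.liftQ_apply,
          LinearMap.add_apply, map_add, LinearMap.add_comp]
      map_smul' := fun c F => by
        apply Submodule.linearMap_qext
        refine LinearMap.ext fun w => ?_
        simp only [LinearMap.comp_apply, Submodule.mkQ_apply, Submodule.liftQ_apply,
          LinearMap.smul_apply, map_smul, RingHom.id_apply, LinearMap.smul_comp] }
  have hb2apply : ∀ (F : H m k) (w : H m N),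
      b2 F (Submodule.Quotient.mk w) = b F w := fun F w => rfl
  -- descend the first argument
  have hker2 : Ic m I' k ≤ LinearMap.ker b2 := by
    intro F hF
    rw [LinearMap.mem_ker]
    apply Submodule.linearMap_qext
    refine LinearMap.ext fun w => ?_
    rw [LinearMap.comp_apply, Submodule.mkQ_apply, hb2apply, hbapply]
    simp only [LinearMap.zero_comp, LinearMap.zero_apply]
    rw [mk_eq_zero_iff]
    exact Ideal.mul_mem_right _ _ hF
  let β : (H m k ⧸ Ic m I' k) →ₗ[ℂ]
      ((H m N ⧸ Ic m I' N) →ₗ[ℂ] (H m (N + k) ⧸ Ic m I' (N + k))) :=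
    Submodule.liftQ _ b2 hker2
  have hβapply : ∀ (F : H m k) (w : H m N),
      β (Submodule.Quotient.mk F) (Submodule.Quotient.mk w) = b F w := fun F w => rfl
  -- injectivity of β
  have hβinj : LinearMap.ker β = ⊥ := by
    rw [LinearMap.ker_eq_bot']
    intro x hx
    obtain ⟨F, rfl⟩ := Submodule.Quotient.mk_surjective _ x
    rw [mk_eq_zero_iff]
    by_contra hF
    obtain ⟨h, hh, hFh⟩ := hI'.2.2.2.2 k (by omega) (F : MvPolynomial (Fin m) ℂ)
      ((mem_homogeneousSubmodule _ _).1 F.2) hF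
    have hhN : h.IsHomogeneous N := by rwa [Nat.add_sub_cancel] at hh
    have h5 := congrArg (fun f => f (Submodule.Quotient.mk
      (⟨h, (mem_homogeneousSubmodule _ _).2 hhN⟩ : H m N))) hx
    simp only [LinearMap.zero_apply] at h5
    rw [hβapply, hbapply, mk_eq_zero_iff] at h5
    exact hFh h5
  -- injectivity of the flip
  have hflipinj : LinearMap.ker β.flip = ⊥ := by
    rw [LinearMap.ker_eq_bot']
    intro x hx
    obtain ⟨w, rfl⟩ := Submodule.Quotient.mk_surjective _ x
    rw [mk_eq_zero_iff]
    by_contra hw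
    obtain ⟨h, hh, hwh⟩ := hI'.2.2.2.2 N (by omega) (w : MvPolynomial (Fin m) ℂ)
      ((mem_homogeneousSubmodule _ _).1 w.2) hw
    have hhk : h.IsHomogeneous k := by rwa [Nat.add_sub_cancel_left] at hh
    have h5 := congrArg (fun f => f (Submodule.Quotient.mk
      (⟨h, (mem_homogeneousSubmodule _ _).2 hhk⟩ : H m k))) hx
    simp only [LinearMap.zero_apply] at h5
    rw [LinearMap.flip_apply, hβapply, hbapply, mk_eq_zero_iff] at h5
    simp only [coe_mulE] at h5
    rw [mul_comm] at h5
    exact hwh h5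
  -- dimension count
  have hdim2 : Module.finrank ℂ ((H m N ⧸ Ic m I' N) →ₗ[ℂ] (H m (N + k) ⧸ Ic m I' (N + k)))
      = Module.finrank ℂ (H m N ⧸ Ic m I' N) := by
    rw [Module.finrank_linearMap, hQ2, mul_one]
  have hdim2' : Module.finrank ℂ ((H m k ⧸ Ic m I' k) →ₗ[ℂ] (H m (N + k) ⧸ Ic m I' (N + k)))
      = Module.finrank ℂ (H m k ⧸ Ic m I' k) := by
    rw [Module.finrank_linearMap, hQ2, mul_one]
  have hle1 : Module.finrank ℂ (H m k ⧸ Ic m I' k)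
      ≤ Module.finrank ℂ (H m N ⧸ Ic m I' N) := by
    rw [← hdim2]
    exact LinearMap.finrank_le_finrank_of_injective (LinearMap.ker_eq_bot.1 hβinj)
  have hle2 : Module.finrank ℂ (H m N ⧸ Ic m I' N)
      ≤ Module.finrank ℂ (H m k ⧸ Ic m I' k) := by
    rw [← hdim2']
    exact LinearMap.finrank_le_finrank_of_injective (LinearMap.ker_eq_bot.1 hflipinj)
  have hdim : Module.finrank ℂ (H m k ⧸ Ic m I' k)
      = Module.finrank ℂ ((H m N ⧸ Ic m I' N) →ₗ[ℂ] (H m (N + k) ⧸ Ic m I' (N + k))) := by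
    rw [hdim2]; omega
  have hβsurj : LinearMap.range β = ⊤ :=
    (LinearMap.ker_eq_bot_iff_range_eq_top_of_finrank_eq_finrank hdim).1 hβinj
  -- the target functional
  have hle : Ic m I' N ≤ LinearMap.ker (Ic m I N).mkQ := by
    rw [Submodule.ker_mkQ]
    exact fun x hx => hII hx
  let pr : (H m N ⧸ Ic m I' N) →ₗ[ℂ] (H m N ⧸ Ic m I N) :=
    Submodule.liftQ _ (Ic m I N).mkQ hle
  let e : (H m N ⧸ Ic m I N) ≃ₗ[ℂ] (H m (N + k) ⧸ Ic m I' (N + k)) :=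
    LinearEquiv.ofFinrankEq _ _ (hQ1.trans hQ2.symm)
  let φ : (H m N ⧸ Ic m I' N) →ₗ[ℂ] (H m (N + k) ⧸ Ic m I' (N + k)) :=
    (e : (H m N ⧸ Ic m I N) →ₗ[ℂ] (H m (N + k) ⧸ Ic m I' (N + k))) ∘ₗ pr
  obtain ⟨x, hx⟩ : ∃ x, β x = φ := by
    have h6 : φ ∈ LinearMap.range β := hβsurj ▸ Submodule.mem_top
    exact h6
  obtain ⟨F, rfl⟩ := Submodule.Quotient.mk_surjective _ x
  refine ⟨F, fun q => ?_⟩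
  have hval : (Submodule.Quotient.mk (mulE F q) : H m (N + k) ⧸ Ic m I' (N + k))
      = e (Submodule.Quotient.mk q : H m N ⧸ Ic m I N) := by
    rw [← hbapply, ← hβapply, hx]
    rfl
  constructor
  · intro hq
    have h0 : (Submodule.Quotient.mk q : H m N ⧸ Ic m I N) = 0 := (mk_eq_zero_iff q).2 hq
    rw [h0, map_zero] at hval
    have h7 := (mk_eq_zero_iff _).1 hval
    simp only [coe_mulE] at h7
    rwa [mul_comm] at h7
  · intro hq
    by_contra hqI
    have h1 : (Submodule.Quotient.mk q : H m N ⧸ Ic m I N) ≠ 0 :=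
      fun h0 => hqI ((mk_eq_zero_iff q).1 h0)
    have h2 : e (Submodule.Quotient.mk q : H m N ⧸ Ic m I N) ≠ 0 := by
      intro h
      exact h1 (e.map_eq_zero_iff.1 h)
    rw [← hval] at h2
    exact h2 ((mk_eq_zero_iff _).2 (by rw [coe_mulE, mul_comm]; exact hq))

lemma component_mem {m : ℕ} {J : Ideal (MvPolynomial (Fin m) ℂ)}
    (hJ : J.IsHomogeneous (homogeneousSubmodule (Fin m) ℂ)) {g : MvPolynomial (Fin m) ℂ}
    (hg : g ∈ J) (i : ℕ) :
    homogeneousComponent i g ∈ J := by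
  have h2 := hJ i hg
  have h3 : ((DirectSum.decompose (homogeneousSubmodule (Fin m) ℂ) g i :
      homogeneousSubmodule (Fin m) ℂ i) : MvPolynomial (Fin m) ℂ) = homogeneousComponent i g :=
    decomposition.decompose'_apply g i
  rwa [h3] at h2

lemma sum_components {m : ℕ} (g : MvPolynomial (Fin m) ℂ) (n : ℕ) (hn : g.totalDegree < n) :
    ∑ i ∈ Finset.range n, homogeneousComponent i g = g := by
  conv_rhs => rw [← sum_homogeneousComponent g]
  apply (Finset.sum_subset (Finset.range_subset_range.2 (by omega)) ?_).symm
  intro i _ hni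
  simp only [Finset.mem_range, not_lt] at hni
  exact homogeneousComponent_eq_zero i g (by omega)

lemma component_mul {m : ℕ} (g F : MvPolynomial (Fin m) ℂ) {k : ℕ}
    (hF : F.IsHomogeneous k) (d : ℕ) :
    homogeneousComponent (d + k) (g * F) = homogeneousComponent d g * F := by
  set n := max g.totalDegree d + 1 with hn
  have hg : g = ∑ i ∈ Finset.range n, homogeneousComponent i g :=
    (sum_components g n (by omega)).symm
  nth_rewrite 1 [hg]
  rw [Finset.sum_mul, map_sum]
  have hterm : ∀ i ∈ Finset.range n,
      homogeneousComponent (d + k) (homogeneousComponent i g * F)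
        = if i = d then homogeneousComponent i g * F else 0 := by
    intro i _
    have hmem : homogeneousComponent i g * F ∈ homogeneousSubmodule (Fin m) ℂ (i + k) :=
      (mem_homogeneousSubmodule _ _).2 ((homogeneousComponent_isHomogeneous i g).mul hF)
    rw [homogeneousComponent_of_mem hmem]
    congr 1
    simp [Nat.add_right_cancel_iff, eq_comm]
  rw [Finset.sum_congr rfl hterm, Finset.sum_ite_eq' (Finset.range n) d
    (fun i => homogeneousComponent i g * F), if_pos (Finset.mem_range.2 (by omega))]


end GorensteinColonAux

open GorensteinColonAux in
/-- if `S/I` is Artinian Gorenstein with socle degree `N` and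
`I' ⊆ I` is a homogeneous ideal with `S/I'` Artinian Gorenstein with socle degree
`N + k`, then `I = (I' : F)` for some homogeneous form `F` of degree `k`. -/
theorem gorenstein_sub_gorenstein_is_colon (m N k : ℕ)
    (I I' : Ideal (MvPolynomial (Fin m) ℂ)) (hII : I' ≤ I)
    (hI : IsArtinianGorenstein m I N) (hI' : IsArtinianGorenstein m I' (N + k)) :
    ∃ F : MvPolynomial (Fin m) ℂ, F.IsHomogeneous k ∧
      ∀ g : MvPolynomial (Fin m) ℂ, g ∈ I ↔ g * F ∈ I' := by
  obtain ⟨F, hFmem⟩ := key m N k I I' hII hI hI'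
  have hFk : (F : MvPolynomial (Fin m) ℂ).IsHomogeneous k :=
    (mem_homogeneousSubmodule _ _).1 F.2
  refine ⟨(F : MvPolynomial (Fin m) ℂ), hFk, ?_⟩
  -- homogeneous version
  have hhom : ∀ (a : ℕ) (q : MvPolynomial (Fin m) ℂ), q.IsHomogeneous a →
      (q ∈ I ↔ q * (F : MvPolynomial (Fin m) ℂ) ∈ I') := by
    intro a q hq
    constructor
    · intro hqI
      by_cases haN : N < a
      · exact hI'.2.2.1 _ ⟨a + k, by omega, hq.mul hFk⟩
      · push_neg at haN
        by_contra hqF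
        obtain ⟨p, hp, hnp⟩ := hI'.2.2.2.2 (a + k) (by omega) _ (hq.mul hFk) hqF
        have hp' : p.IsHomogeneous (N - a) := by
          have harith : N + k - (a + k) = N - a := by omega
          rwa [harith] at hp
        have hqp : (q * p).IsHomogeneous N := by
          have harith : a + (N - a) = N := by omega
          exact harith ▸ hq.mul hp'
        have hqpI : q * p ∈ I := Ideal.mul_mem_right _ _ hqI
        have hmem := (hFmem ⟨q * p, (mem_homogeneousSubmodule _ _).2 hqp⟩).1 hqpI
        exact hnp (by rw [show q * ↑F * p = q * p * ↑F by ring]; exact hmem)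
    · intro hqF
      by_cases haN : N < a
      · exact hI.2.2.1 _ ⟨a, haN, hq⟩
      · push_neg at haN
        by_contra hqI
        obtain ⟨p, hp, hnp⟩ := hI.2.2.2.2 a haN q hq hqI
        have hqp : (q * p).IsHomogeneous N := by
          have harith : a + (N - a) = N := by omega
          exact harith ▸ hq.mul hp
        have h1 : q * p * (F : MvPolynomial (Fin m) ℂ) ∈ I' := by
          rw [show q * p * ↑F = q * ↑F * p by ring]
          exact Ideal.mul_mem_right _ _ hqF
        exact hnp ((hFmem ⟨q * p, (mem_homogeneousSubmodule _ _).2 hqp⟩).2 h1)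
  intro g
  constructor
  · intro hg
    rw [← sum_components g (g.totalDegree + 1) (by omega), Finset.sum_mul]
    apply Ideal.sum_mem
    intro i _
    exact (hhom i _ (homogeneousComponent_isHomogeneous i g)).1 (component_mem hI.1 hg i)
  · intro hgF
    rw [← sum_components g (g.totalDegree + 1) (by omega)]
    apply Ideal.sum_mem
    intro i _
    apply (hhom i _ (homogeneousComponent_isHomogeneous i g)).2
    rw [← component_mul g _ hFk i]
    exact component_mem hI'.1 hgF (i + k)
end
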